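/- Under the refinement setting with Z = T(U), if there exists a state z with P(Z=z) > 0 such that the refinement splits {Z=z} across the Bayes boundary — i.e., there exist u₁, u₂ in the preimage of z with P(U=u₁) > 0, P(U=u₂) > 0, η_BL(u₁) < 1/2 < η_BL(u₂) — then the refinement inequality is strict: E[min(η_BL(U), 1-η_BL(U))] < E[min(η_B(Z), 1-η_B(Z))]. -/

import Mathlib

/-!
With `w u = P(U = u)` and `a u = P(U = u, Y = 1)`, the term of `u` in the refined risk is
`w u * min (a u / w u) (1 - a u / w u) = min (a u) (w u - a u)`, and the coarse masses of
`{Z = z}` are the sums of `a` and `w` over the fibre `T⁻¹ z`. Fibrewise the claim is therefore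
`∑ min (a u) (b u) ≤ min (∑ a u) (∑ b u)` with `b = w - a`, which is strict as soon as the
fibre contains a `u₁` with `a < b` and a `u₂` with `b < a`, i.e. `η_BL` on both sides of `1/2`.
-/

open Finset

section Fibers

variable {Ω α β : Type*} [Fintype Ω] [Fintype α] [DecidableEq α]

lemma sum_mul_comp_eq_sum_fiber {R : Type*} [Semiring R] (P : Ω → R) (X : Ω → α) (f : α → R) :
    ∑ ω, P ω * f (X ω) = ∑ x, (∑ ω ∈ univ.filter (fun ω => X ω = x), P ω) * f x := by
  rw [← sum_fiberwise univ X]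
  refine sum_congr rfl fun x _ => ?_
  rw [sum_mul]
  exact sum_congr rfl fun ω hω => by rw [(mem_filter.1 hω).2]

lemma sum_filter_comp_eq_sum_fiber {M : Type*} [AddCommMonoid M] [DecidableEq β]
    (P : Ω → M) (X : Ω → α) (g : α → β) (b : β) (p : Ω → Prop) [DecidablePred p] :
    ∑ ω ∈ univ.filter (fun ω => g (X ω) = b ∧ p ω), P ω
      = ∑ x ∈ univ.filter (fun x => g x = b), ∑ ω ∈ univ.filter (fun ω => X ω = x ∧ p ω), P ω := by
  rw [← sum_fiberwise_of_maps_to (g := X) (t := univ.filter (fun x => g x = b))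
    (fun ω hω => by simpa using (mem_filter.1 hω).2.1)]
  refine sum_congr rfl fun x hx => sum_congr ?_ fun _ _ => rfl
  ext ω
  simp only [mem_filter, mem_univ, true_and] at hx ⊢
  constructor
  · exact fun ⟨⟨_, h⟩, hX⟩ => ⟨hX, h⟩
  · exact fun ⟨hX, h⟩ => ⟨⟨hX ▸ hx, h⟩, hX⟩

end Fibers

lemma mul_min_div_one_sub_div {K : Type*} [Field K] [LinearOrder K] [IsStrictOrderedRing K]
    {a w : K} (ha : 0 ≤ a) (haw : a ≤ w) :
    w * min (a / w) (1 - a / w) = min a (w - a) := by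
  rcases (ha.trans haw).eq_or_lt with rfl | hw
  · simp [le_antisymm haw ha]
  · rw [mul_min_of_nonneg _ _ hw.le, mul_sub, mul_one, mul_div_cancel₀ _ hw.ne']

section MinSum

variable {ι M : Type*} [AddCommMonoid M] [LinearOrder M] [IsOrderedCancelAddMonoid M]
  {s : Finset ι} {f g : ι → M}

lemma sum_min_le_min_sum : ∑ i ∈ s, min (f i) (g i) ≤ min (∑ i ∈ s, f i) (∑ i ∈ s, g i) :=
  le_min (sum_le_sum fun _ _ => min_le_left _ _) (sum_le_sum fun _ _ => min_le_right _ _)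

lemma sum_min_lt_min_sum {i j : ι} (hi : i ∈ s) (hj : j ∈ s) (hfg : f i < g i) (hgf : g j < f j) :
    ∑ k ∈ s, min (f k) (g k) < min (∑ k ∈ s, f k) (∑ k ∈ s, g k) :=
  lt_min (sum_lt_sum (fun _ _ => min_le_left _ _) ⟨j, hj, min_lt_of_right_lt hgf⟩)
    (sum_lt_sum (fun _ _ => min_le_right _ _) ⟨i, hi, min_lt_of_left_lt hfg⟩)

end MinSum

lemma sum_min_lt_sum_min_fiberwise {ι κ M : Type*} [Fintype ι] [Fintype κ] [DecidableEq κ]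
    [AddCommMonoid M] [LinearOrder M] [IsOrderedCancelAddMonoid M]
    (T : ι → κ) {f g : ι → M} {i j : ι} (hij : T i = T j) (hfg : f i < g i) (hgf : g j < f j) :
    ∑ i, min (f i) (g i)
      < ∑ k, min (∑ i ∈ univ.filter (fun i => T i = k), f i)
          (∑ i ∈ univ.filter (fun i => T i = k), g i) := by
  rw [← sum_fiberwise univ T]
  exact sum_lt_sum (fun _ _ => sum_min_le_min_sum)
    ⟨T i, mem_univ _, sum_min_lt_min_sum (by simp) (by simp [hij]) hfg hgf⟩

theorem stmt3_general {Ω 𝒰 𝒵 : Type*} [Fintype Ω] [Fintype 𝒰] [Fintype 𝒵]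
    [DecidableEq 𝒰] [DecidableEq 𝒵]
    (P : Ω → ℝ) (hP : ∀ ω, 0 ≤ P ω)
    (Y : Ω → Bool) (U : Ω → 𝒰) (T : 𝒰 → 𝒵) (Z : Ω → 𝒵) (hZ : Z = T ∘ U)
    (ηBL : 𝒰 → ℝ)
    (hηBL : ∀ u, ηBL u =
      (∑ ω ∈ univ.filter (fun ω => U ω = u ∧ Y ω = true), P ω)
        / (∑ ω ∈ univ.filter (fun ω => U ω = u), P ω))
    (ηB : 𝒵 → ℝ)
    (hηB : ∀ z, ηB z =
      (∑ ω ∈ univ.filter (fun ω => Z ω = z ∧ Y ω = true), P ω)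
        / (∑ ω ∈ univ.filter (fun ω => Z ω = z), P ω))
    (z : 𝒵)
    (u₁ u₂ : 𝒰) (hu₁z : T u₁ = z) (hu₂z : T u₂ = z)
    (hu₁pos : 0 < ∑ ω ∈ univ.filter (fun ω => U ω = u₁), P ω)
    (hu₂pos : 0 < ∑ ω ∈ univ.filter (fun ω => U ω = u₂), P ω)
    (hsplit : ηBL u₁ < 1/2 ∧ 1/2 < ηBL u₂) :
    ∑ ω, P ω * min (ηBL (U ω)) (1 - ηBL (U ω))
      < ∑ ω, P ω * min (ηB (Z ω)) (1 - ηB (Z ω)) := by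
  subst hZ
  set w : 𝒰 → ℝ := fun u => ∑ ω ∈ univ.filter (fun ω => U ω = u), P ω
  set a : 𝒰 → ℝ := fun u => ∑ ω ∈ univ.filter (fun ω => U ω = u ∧ Y ω = true), P ω
  have ha_nonneg : ∀ u, 0 ≤ a u := fun u => sum_nonneg fun ω _ => hP ω
  have ha_le : ∀ u, a u ≤ w u := fun u =>
    sum_le_sum_of_subset_of_nonneg (monotone_filter_right _ fun _ _ h => h.1) fun ω _ _ => hP ω
  have hrefined : ∑ ω, P ω * min (ηBL (U ω)) (1 - ηBL (U ω)) = ∑ u, min (a u) (w u - a u) := by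
    refine (sum_mul_comp_eq_sum_fiber P U fun u => min (ηBL u) (1 - ηBL u)).trans
      (sum_congr rfl fun u _ => ?_)
    rw [hηBL]
    exact mul_min_div_one_sub_div (ha_nonneg u) (ha_le u)
  have hcoarse : ∑ ω, P ω * min (ηB ((T ∘ U) ω)) (1 - ηB ((T ∘ U) ω))
      = ∑ z', min (∑ u ∈ univ.filter (fun u => T u = z'), a u)
          (∑ u ∈ univ.filter (fun u => T u = z'), (w u - a u)) := by
    refine (sum_mul_comp_eq_sum_fiber P (T ∘ U) fun z' => min (ηB z') (1 - ηB z')).trans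
      (sum_congr rfl fun z' _ => ?_)
    have hW := sum_filter_comp_eq_sum_fiber P U T z' (fun _ => True)
    simp only [and_true] at hW
    rw [hηB, Function.comp_def, hW, sum_filter_comp_eq_sum_fiber P U T z' (Y · = true),
      sum_sub_distrib]
    exact mul_min_div_one_sub_div (sum_nonneg fun u _ => ha_nonneg u)
      (sum_le_sum fun u _ => ha_le u)
  have h₁ : a u₁ < w u₁ - a u₁ := by
    have := hsplit.1
    rw [hηBL, div_lt_iff₀ hu₁pos] at this
    linarith
  have h₂ : w u₂ - a u₂ < a u₂ := by
    have := hsplit.2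
    rw [hηBL, lt_div_iff₀ hu₂pos] at this
    linarith
  rw [hrefined, hcoarse]
  exact sum_min_lt_sum_min_fiberwise T (hu₁z.trans hu₂z.symm) h₁ h₂

/-- Strict refinement inequality: if some broad state z is split by the refinement across
the Bayes boundary 1/2, the refined Bayes 0-1 risk is strictly smaller than the coarse one. -/
theorem stmt3 {Ω 𝒰 𝒵 : Type*} [Fintype Ω] [Fintype 𝒰] [Fintype 𝒵]
    [DecidableEq 𝒰] [DecidableEq 𝒵]
    (P : Ω → ℝ) (hP : ∀ ω, 0 ≤ P ω) (hP1 : ∑ ω, P ω = 1)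
    (Y : Ω → Bool) (U : Ω → 𝒰) (T : 𝒰 → 𝒵) (Z : Ω → 𝒵) (hZ : Z = T ∘ U)
    (ηBL : 𝒰 → ℝ)
    (hηBL : ∀ u, ηBL u =
      (∑ ω ∈ univ.filter (fun ω => U ω = u ∧ Y ω = true), P ω)
        / (∑ ω ∈ univ.filter (fun ω => U ω = u), P ω))
    (ηB : 𝒵 → ℝ)
    (hηB : ∀ z, ηB z =
      (∑ ω ∈ univ.filter (fun ω => Z ω = z ∧ Y ω = true), P ω)
        / (∑ ω ∈ univ.filter (fun ω => Z ω = z), P ω))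
    (z : 𝒵) (hzpos : 0 < ∑ ω ∈ univ.filter (fun ω => Z ω = z), P ω)
    (u₁ u₂ : 𝒰) (hu₁z : T u₁ = z) (hu₂z : T u₂ = z)
    (hu₁pos : 0 < ∑ ω ∈ univ.filter (fun ω => U ω = u₁), P ω)
    (hu₂pos : 0 < ∑ ω ∈ univ.filter (fun ω => U ω = u₂), P ω)
    (hsplit : ηBL u₁ < 1/2 ∧ 1/2 < ηBL u₂) :
    ∑ ω, P ω * min (ηBL (U ω)) (1 - ηBL (U ω))
      < ∑ ω, P ω * min (ηB (Z ω)) (1 - ηB (Z ω)) :=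
  stmt3_general P hP Y U T Z hZ ηBL hηBL ηB hηB z u₁ u₂ hu₁z hu₂z hu₁pos hu₂pos hsplit
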